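/- arXiv:math/0407037 — 4 statements merged into one kernel-verified Lean document; each statement's English description precedes it below -/
import Mathlib

section
/- Fix δ > 0. There exists a unitary operator 𝒰 : L²(ℝ) → L²([0,δ) × ℤ) (Lebesgue measure on [0,δ) times counting measure on ℤ) such that for every (p,q,r) ∈ H and every f ∈ L²(ℝ), one has 𝒰(U^δ_{(p,q,r)} f)(t,k) = e^{−2πiδr} e^{−2πiqt} e^{2πiqδk} (𝒰f)(t, k−p) for almost every t ∈ [0,δ) and every k ∈ ℤ. (Baggett's direct-integral decomposition of the Gabor representation, fibered form.) -/
open MeasureTheory Set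

namespace GaborAux

noncomputable section

def mIco (δ : ℝ) : Measure ℝ := (volume : Measure ℝ).restrict (Set.Ico 0 δ)
def mP (δ : ℝ) : Measure (ℝ × ℤ) := (mIco δ).prod (Measure.count : Measure ℤ)
def rho (δ : ℝ) : ℝ × ℤ → ℝ := fun x => (x.2 : ℝ) - x.1 / δ
def tau (δ : ℝ) : ℝ → ℝ × ℤ := fun s => (δ * ((⌈s⌉ : ℝ) - s), ⌈s⌉)

lemma measurable_rho (δ : ℝ) : Measurable (rho δ) :=
  ((measurable_of_countable (fun k : ℤ => (k : ℝ))).comp measurable_snd).sub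
    (measurable_fst.div_const δ)

lemma measurable_tau (δ : ℝ) : Measurable (tau δ) :=
  (measurable_const.mul
    (((measurable_of_countable (fun k : ℤ => (k : ℝ))).comp Int.measurable_ceil).sub
      measurable_id)).prodMk Int.measurable_ceil

instance : SFinite (Measure.count : Measure ℤ) :=
  inferInstanceAs (SFinite (Measure.sum (Measure.dirac : ℤ → Measure ℤ)))

instance (δ : ℝ) : SigmaFinite (mIco δ) :=
  inferInstanceAs (SigmaFinite ((volume : Measure ℝ).restrict (Set.Ico 0 δ)))

instance (δ : ℝ) : SFinite (mP δ) :=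
  inferInstanceAs (SFinite ((mIco δ).prod (Measure.count : Measure ℤ)))

variable {δ : ℝ}

/-- The affine reflection `t ↦ k - t/δ` as a measurable equivalence. -/
def refl0 (hδ : 0 < δ) (k : ℤ) : ℝ ≃ᵐ ℝ where
  toFun := fun t => (k : ℝ) - t / δ
  invFun := fun u => δ * ((k : ℝ) - u)
  left_inv := fun t => by field_simp; ring
  right_inv := fun u => by field_simp; ring
  measurable_toFun := measurable_const.sub (measurable_id.div_const δ)
  measurable_invFun := measurable_const.mul (measurable_const.sub measurable_id)

lemma preimage_refl0 (hδ : 0 < δ) (k : ℤ) :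
    (fun t : ℝ => (k : ℝ) - t / δ) ⁻¹' (Set.Ioc ((k : ℝ) - 1) k) = Set.Ico 0 δ := by
  ext t
  simp only [Set.mem_preimage, Set.mem_Ioc, Set.mem_Ico]
  constructor
  · rintro ⟨h1, h2⟩
    have h1' : t / δ < 1 := by linarith
    have h2' : 0 ≤ t / δ := by linarith
    rw [div_lt_one hδ] at h1'
    refine ⟨?_, h1'⟩
    nlinarith [mul_nonneg h2' hδ.le, div_mul_cancel₀ t hδ.ne']
  · rintro ⟨h1, h2⟩
    have h2' : t / δ < 1 := (div_lt_one hδ).2 h2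
    have h1' : 0 ≤ t / δ := div_nonneg h1 hδ.le
    constructor <;> linarith

lemma map_refl0_volume (hδ : 0 < δ) (k : ℤ) :
    Measure.map (fun t : ℝ => (k : ℝ) - t / δ) (volume : Measure ℝ)
      = ENNReal.ofReal δ • volume := by
  have hcomp : (fun t : ℝ => (k : ℝ) - t / δ)
      = (fun u : ℝ => (k : ℝ) + u) ∘ (fun t : ℝ => (-δ⁻¹) * t) := by
    funext t; simp only [Function.comp_apply]; field_simp; ring
  rw [hcomp, ← Measure.map_map (measurable_const_add _) (measurable_const_mul _),
    Real.map_volume_mul_left (neg_ne_zero.2 (inv_ne_zero hδ.ne')),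
    Measure.map_smul, map_add_left_eq_self]
  congr 1
  rw [inv_neg, inv_inv, abs_neg, abs_of_pos hδ]

lemma map_refl0 (hδ : 0 < δ) (k : ℤ) :
    Measure.map (fun t : ℝ => (k : ℝ) - t / δ) (mIco δ)
      = ENNReal.ofReal δ • (volume : Measure ℝ).restrict (Set.Ioc ((k : ℝ) - 1) k) := by
  have he : MeasurableEmbedding (fun t : ℝ => (k : ℝ) - t / δ) :=
    (refl0 hδ k).measurableEmbedding
  calc Measure.map (fun t : ℝ => (k : ℝ) - t / δ) (mIco δ)
      = Measure.map (fun t : ℝ => (k : ℝ) - t / δ)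
        ((volume : Measure ℝ).restrict
          ((fun t : ℝ => (k : ℝ) - t / δ) ⁻¹' (Set.Ioc ((k : ℝ) - 1) k))) := by
        rw [preimage_refl0 hδ k]; rfl
    _ = (Measure.map (fun t : ℝ => (k : ℝ) - t / δ) (volume : Measure ℝ)).restrict
          (Set.Ioc ((k : ℝ) - 1) k) := (he.restrict_map _ _).symm
    _ = _ := by rw [map_refl0_volume hδ k, Measure.restrict_smul]

lemma iUnion_Ioc_int : (⋃ k : ℤ, Set.Ioc ((k : ℝ) - 1) k) = Set.univ := by
  refine Set.eq_univ_of_forall fun x => Set.mem_iUnion.2 ⟨⌈x⌉, ?_⟩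
  have h1 := Int.ceil_lt_add_one x
  have h2 := Int.le_ceil x
  exact ⟨by linarith, h2⟩

lemma disj_Ioc_int : Pairwise (Function.onFun Disjoint fun k : ℤ => Set.Ioc ((k : ℝ) - 1) k) := by
  intro i j hij
  refine Set.Ioc_disjoint_Ioc.2 ?_
  rw [min_le_iff, le_max_iff, le_max_iff]
  rcases hij.lt_or_gt with h | h
  · have : (i : ℝ) + 1 ≤ j := by exact_mod_cast Int.add_one_le_iff.2 h
    exact Or.inl (Or.inr (by linarith))
  · have : (j : ℝ) + 1 ≤ i := by exact_mod_cast Int.add_one_le_iff.2 h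
    exact Or.inr (Or.inl (by linarith))

lemma rho_mp (hδ : 0 < δ) :
    MeasurePreserving (rho δ) (mP δ) (ENNReal.ofReal δ • (volume : Measure ℝ)) := by
  refine ⟨measurable_rho δ, ?_⟩
  have h1 : (Measure.count : Measure ℤ) = Measure.sum Measure.dirac := rfl
  rw [mP, h1, Measure.prod_sum_right, Measure.map_sum (measurable_rho δ).aemeasurable]
  have h2 : ∀ k : ℤ, Measure.map (rho δ) ((mIco δ).prod (Measure.dirac k))
      = ENNReal.ofReal δ • (volume : Measure ℝ).restrict (Set.Ioc ((k : ℝ) - 1) k) := by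
    intro k
    rw [Measure.prod_dirac,
      Measure.map_map (measurable_rho δ) (measurable_prodMk_right)]
    have : rho δ ∘ (fun t : ℝ => (t, k)) = fun t : ℝ => (k : ℝ) - t / δ := rfl
    rw [this, map_refl0 hδ k]
  simp only [h2]
  have h3 : Measure.sum
        (fun k : ℤ => ENNReal.ofReal δ • (volume : Measure ℝ).restrict (Set.Ioc ((k : ℝ) - 1) k))
      = ENNReal.ofReal δ •
        Measure.sum (fun k : ℤ => (volume : Measure ℝ).restrict (Set.Ioc ((k : ℝ) - 1) k)) := by
    ext s hs
    simp [Measure.sum_apply _ hs, ENNReal.tsum_mul_left]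
  rw [h3, ← Measure.restrict_iUnion disj_Ioc_int (fun k => measurableSet_Ioc),
    iUnion_Ioc_int, Measure.restrict_univ]

lemma ae_fst_mem (hδ : 0 < δ) : ∀ᵐ x ∂(mP δ), x.1 ∈ Set.Ico 0 δ := by
  rw [ae_iff]
  have h : {x : ℝ × ℤ | ¬ x.1 ∈ Set.Ico 0 δ} = (Set.Ico 0 δ)ᶜ ×ˢ (Set.univ : Set ℤ) := by
    ext x; simp
  rw [h, mP, Measure.prod_prod, mIco,
    Measure.restrict_apply measurableSet_Ico.compl]
  simp

lemma tau_rho_ae (hδ : 0 < δ) : ∀ᵐ x ∂(mP δ), tau δ (rho δ x) = x := by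
  filter_upwards [ae_fst_mem hδ] with x hx
  obtain ⟨t, k⟩ := x
  obtain ⟨h0, h1⟩ := hx
  have hceil : ⌈(k : ℝ) - t / δ⌉ = k := by
    rw [Int.ceil_eq_iff]
    have h2 : t / δ < 1 := (div_lt_one hδ).2 h1
    have h3 : 0 ≤ t / δ := div_nonneg h0 hδ.le
    constructor <;> [skip; skip] <;> push_cast <;> linarith
  simp only [tau, rho, hceil, Prod.mk.injEq]
  exact ⟨by field_simp; ring, trivial⟩

lemma rho_tau (hδ : 0 < δ) (s : ℝ) : rho δ (tau δ s) = s := by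
  simp only [rho, tau]
  field_simp
  ring

lemma tau_mp (hδ : 0 < δ) :
    MeasurePreserving (tau δ) (ENNReal.ofReal δ • (volume : Measure ℝ)) (mP δ) := by
  refine ⟨measurable_tau δ, ?_⟩
  rw [← (rho_mp hδ).map_eq, Measure.map_map (measurable_tau δ) (measurable_rho δ)]
  have h := Measure.map_congr (mβ := inferInstance) (μ := mP δ) (f := tau δ ∘ rho δ) (g := id) (tau_rho_ae hδ)
  rw [h, Measure.map_id]

lemma ofReal_ne_zero' (hδ : 0 < δ) : (ENNReal.ofReal δ) ≠ 0 := by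
  simp [ENNReal.ofReal_eq_zero, not_le, hδ]

lemma ae_comp_rho (hδ : 0 < δ) {P : ℝ → Prop} (h : ∀ᵐ s ∂(volume : Measure ℝ), P s) :
    ∀ᵐ x ∂(mP δ), P (rho δ x) := by
  have h' : ∀ᵐ s ∂(ENNReal.ofReal δ • (volume : Measure ℝ)), P s := Measure.ae_smul_measure h _
  rw [ae_iff] at h' ⊢
  exact (rho_mp hδ).quasiMeasurePreserving.preimage_null h'

lemma ae_comp_tau (hδ : 0 < δ) {P : ℝ × ℤ → Prop} (h : ∀ᵐ x ∂(mP δ), P x) :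
    ∀ᵐ s ∂(volume : Measure ℝ), P (tau δ s) := by
  rw [ae_iff] at h ⊢
  have h3 := (tau_mp hδ).quasiMeasurePreserving.preimage_null h
  rw [Measure.smul_apply, smul_eq_mul, mul_eq_zero] at h3
  rcases h3 with h3 | h3
  · exact absurd h3 (ofReal_ne_zero' hδ)
  · exact h3

lemma perk (hδ : 0 < δ) {P : ℝ × ℤ → Prop} (h : ∀ᵐ x ∂(mP δ), P x) (k : ℤ) :
    ∀ᵐ t ∂(mIco δ), P (t, k) := by
  have hswap : MeasurePreserving (Prod.swap : ℤ × ℝ → ℝ × ℤ)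
      ((Measure.count : Measure ℤ).prod (mIco δ)) (mP δ) :=
    ⟨measurable_swap, Measure.prod_swap⟩
  have h2 : ∀ᵐ y ∂((Measure.count : Measure ℤ).prod (mIco δ)), P y.swap := by
    rw [ae_iff] at h ⊢
    exact hswap.quasiMeasurePreserving.preimage_null h
  have h3 := Measure.ae_ae_of_ae_prod h2
  -- h3 : ∀ᵐ k ∂count, ∀ᵐ t ∂mIco δ, P (t, k)
  rw [ae_iff] at h3
  have h4 : {k : ℤ | ¬ ∀ᵐ t ∂(mIco δ), P ((k, t).swap)} = ∅ :=
    Measure.count_eq_zero_iff.mp h3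
  by_contra hk
  have : k ∈ {k : ℤ | ¬ ∀ᵐ t ∂(mIco δ), P ((k, t).swap)} := hk
  rw [h4] at this
  exact this

/-! ### The Lp layer -/

def cst (δ : ℝ) : ℂ := ((Real.sqrt δ)⁻¹ : ℝ)

lemma cst_ne (hδ : 0 < δ) : cst δ ≠ 0 := by
  simp only [cst, ne_eq, Complex.ofReal_eq_zero, inv_eq_zero]
  exact (Real.sqrt_pos.2 hδ).ne'

lemma memJ (f : Lp ℂ 2 (volume : Measure ℝ)) :
    MemLp (⇑f) 2 (ENNReal.ofReal δ • (volume : Measure ℝ)) :=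
  (Lp.memLp f).smul_measure ENNReal.ofReal_ne_top

lemma memJ' (hδ : 0 < δ) (g : Lp ℂ 2 (ENNReal.ofReal δ • (volume : Measure ℝ))) :
    MemLp (⇑g) 2 (volume : Measure ℝ) := by
  have h := (Lp.memLp g).smul_measure (c := (ENNReal.ofReal δ)⁻¹)
    (by simp [ofReal_ne_zero' hδ])
  rwa [smul_smul, ENNReal.inv_mul_cancel (ofReal_ne_zero' hδ) ENNReal.ofReal_ne_top,
    one_smul] at h

lemma aeq_unsmul (hδ : 0 < δ) {f g : ℝ → ℂ}
    (h : f =ᵐ[ENNReal.ofReal δ • (volume : Measure ℝ)] g) :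
    f =ᵐ[(volume : Measure ℝ)] g :=
  ae_iff.2 (by
    have := ae_iff.1 h
    rw [Measure.smul_apply, smul_eq_mul, mul_eq_zero] at this
    exact this.resolve_left (ofReal_ne_zero' hδ))

def J (hδ : 0 < δ) : Lp ℂ 2 (volume : Measure ℝ) →ₗ[ℂ]
    Lp ℂ 2 (ENNReal.ofReal δ • (volume : Measure ℝ)) where
  toFun f := (memJ (δ := δ) f).toLp ⇑f
  map_add' f g := by
    apply Lp.ext
    have h1 : ⇑(f + g) =ᵐ[(volume : Measure ℝ)] ⇑f + ⇑g := Lp.coeFn_add f g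
    refine ((MemLp.coeFn_toLp (memJ (δ := δ) (f + g))).trans
      (Measure.ae_smul_measure h1 _)).trans ?_
    have h2 := MemLp.coeFn_toLp (memJ (δ := δ) f)
    have h3 := MemLp.coeFn_toLp (memJ (δ := δ) g)
    have h4 := Lp.coeFn_add ((memJ (δ := δ) f).toLp ⇑f) ((memJ (δ := δ) g).toLp ⇑g)
    filter_upwards [h2, h3, h4] with s e2 e3 e4
    rw [Pi.add_apply, e4, Pi.add_apply, e2, e3]
  map_smul' a f := by
    apply Lp.ext
    have h1 : ⇑(a • f) =ᵐ[(volume : Measure ℝ)] a • ⇑f := Lp.coeFn_smul a f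
    refine ((MemLp.coeFn_toLp (memJ (δ := δ) (a • f))).trans
      (Measure.ae_smul_measure h1 _)).trans ?_
    have h2 := MemLp.coeFn_toLp (memJ (δ := δ) f)
    have h4 := Lp.coeFn_smul a ((memJ (δ := δ) f).toLp ⇑f)
    filter_upwards [h2, h4] with s e2 e4
    simp only [RingHom.id_apply] at *
    rw [Pi.smul_apply, e4, Pi.smul_apply, e2]

def J' (hδ : 0 < δ) : Lp ℂ 2 (ENNReal.ofReal δ • (volume : Measure ℝ)) →ₗ[ℂ]
    Lp ℂ 2 (volume : Measure ℝ) where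
  toFun g := (memJ' hδ g).toLp ⇑g
  map_add' f g := by
    apply Lp.ext
    have h1 : ⇑(f + g) =ᵐ[ENNReal.ofReal δ • (volume : Measure ℝ)] ⇑f + ⇑g := Lp.coeFn_add f g
    refine ((MemLp.coeFn_toLp (memJ' hδ (f + g))).trans (aeq_unsmul hδ h1)).trans ?_
    have h2 := MemLp.coeFn_toLp (memJ' hδ f)
    have h3 := MemLp.coeFn_toLp (memJ' hδ g)
    have h4 := Lp.coeFn_add ((memJ' hδ f).toLp ⇑f) ((memJ' hδ g).toLp ⇑g)
    filter_upwards [h2, h3, h4] with s e2 e3 e4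
    rw [Pi.add_apply, e4, Pi.add_apply, e2, e3]
  map_smul' a f := by
    apply Lp.ext
    have h1 : ⇑(a • f) =ᵐ[ENNReal.ofReal δ • (volume : Measure ℝ)] a • ⇑f := Lp.coeFn_smul a f
    refine ((MemLp.coeFn_toLp (memJ' hδ (a • f))).trans (aeq_unsmul hδ h1)).trans ?_
    have h2 := MemLp.coeFn_toLp (memJ' hδ f)
    have h4 := Lp.coeFn_smul a ((memJ' hδ f).toLp ⇑f)
    filter_upwards [h2, h4] with s e2 e4
    simp only [RingHom.id_apply] at *
    rw [Pi.smul_apply, e4, Pi.smul_apply, e2]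

def Amap (hδ : 0 < δ) : Lp ℂ 2 (volume : Measure ℝ) →ₗ[ℂ] Lp ℂ 2 (mP δ) :=
  (Lp.compMeasurePreservingₗ ℂ (rho δ) (rho_mp hδ)).comp
    ((J hδ).comp ((cst δ) •
      (LinearMap.id : Lp ℂ 2 (volume : Measure ℝ) →ₗ[ℂ] Lp ℂ 2 (volume : Measure ℝ))))

def Bmap (hδ : 0 < δ) : Lp ℂ 2 (mP δ) →ₗ[ℂ] Lp ℂ 2 (volume : Measure ℝ) :=
  (((cst δ)⁻¹ •
      (LinearMap.id : Lp ℂ 2 (volume : Measure ℝ) →ₗ[ℂ] Lp ℂ 2 (volume : Measure ℝ)))).comp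
    ((J' hδ).comp (Lp.compMeasurePreservingₗ ℂ (tau δ) (tau_mp hδ)))

lemma coeA (hδ : 0 < δ) (f : Lp ℂ 2 (volume : Measure ℝ)) :
    ⇑(Amap hδ f) =ᵐ[mP δ] fun x => cst δ * ⇑f (rho δ x) := by
  have h0 : Amap hδ f
      = Lp.compMeasurePreserving (rho δ) (rho_mp hδ) (J hδ (cst δ • f)) := rfl
  rw [h0]
  refine (Lp.coeFn_compMeasurePreserving _ _).trans ?_
  have h1 : ⇑(J hδ (cst δ • f)) =ᵐ[(volume : Measure ℝ)] fun s => cst δ * ⇑f s := by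
    refine (aeq_unsmul hδ (MemLp.coeFn_toLp (memJ (δ := δ) (cst δ • f)))).trans ?_
    filter_upwards [Lp.coeFn_smul (cst δ) f] with s e
    simpa [smul_eq_mul] using e
  exact ae_comp_rho hδ (P := fun s => ⇑(J hδ (cst δ • f)) s = cst δ * ⇑f s) h1

lemma coeB (hδ : 0 < δ) (g : Lp ℂ 2 (mP δ)) :
    ⇑(Bmap hδ g) =ᵐ[(volume : Measure ℝ)] fun s => (cst δ)⁻¹ * ⇑g (tau δ s) := by
  have h0 : Bmap hδ g
      = (cst δ)⁻¹ • (J' hδ (Lp.compMeasurePreserving (tau δ) (tau_mp hδ) g)) := rfl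
  rw [h0]
  refine (Lp.coeFn_smul _ _).trans ?_
  have h1 : ⇑(J' hδ (Lp.compMeasurePreserving (tau δ) (tau_mp hδ) g))
      =ᵐ[(volume : Measure ℝ)] ⇑g ∘ tau δ :=
    (MemLp.coeFn_toLp (memJ' hδ _)).trans
      (aeq_unsmul hδ (Lp.coeFn_compMeasurePreserving _ _))
  filter_upwards [h1] with s e
  simp [e, smul_eq_mul]

lemma BA (hδ : 0 < δ) (f : Lp ℂ 2 (volume : Measure ℝ)) : Bmap hδ (Amap hδ f) = f := by
  apply Lp.ext
  have h1 := coeB hδ (Amap hδ f)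
  have h2 := ae_comp_tau hδ
    (P := fun x => ⇑(Amap hδ f) x = cst δ * ⇑f (rho δ x)) (coeA hδ f)
  filter_upwards [h1, h2] with s e1 e2
  rw [e1, e2, rho_tau hδ s, inv_mul_cancel_left₀ (cst_ne hδ)]

lemma AB (hδ : 0 < δ) (g : Lp ℂ 2 (mP δ)) : Amap hδ (Bmap hδ g) = g := by
  apply Lp.ext
  have h1 := coeA hδ (Bmap hδ g)
  have h2 := ae_comp_rho hδ
    (P := fun s => ⇑(Bmap hδ g) s = (cst δ)⁻¹ * ⇑g (tau δ s)) (coeB hδ g)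
  have h3 := tau_rho_ae hδ
  filter_upwards [h1, h2, h3] with x e1 e2 e3
  rw [e1, e2, e3, mul_inv_cancel_left₀ (cst_ne hδ)]

lemma normA (hδ : 0 < δ) (f : Lp ℂ 2 (volume : Measure ℝ)) : ‖Amap hδ f‖ = ‖f‖ := by
  have h0 : Amap hδ f
      = Lp.compMeasurePreserving (rho δ) (rho_mp hδ) (J hδ (cst δ • f)) := rfl
  have h1 : J hδ (cst δ • f) = (memJ (δ := δ) (cst δ • f)).toLp ⇑(cst δ • f) := rfl
  rw [h0, Lp.norm_compMeasurePreserving, h1, Lp.norm_toLp,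
    eLpNorm_smul_measure_of_ne_zero (ofReal_ne_zero' hδ), smul_eq_mul, ENNReal.toReal_mul]
  have h2 : (eLpNorm ⇑(cst δ • f) 2 (volume : Measure ℝ)).toReal = ‖cst δ • f‖ :=
    (Lp.norm_def _).symm
  rw [h2, norm_smul]
  have h3 : ‖cst δ‖ = (Real.sqrt δ)⁻¹ := by
    rw [cst, Complex.norm_real, Real.norm_eq_abs,
      abs_of_nonneg (inv_nonneg.2 (Real.sqrt_nonneg δ))]
  have h4 : ((ENNReal.ofReal δ) ^ ((1 : ENNReal) / 2).toReal).toReal = Real.sqrt δ := by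
    rw [← ENNReal.toReal_rpow, ENNReal.toReal_ofReal hδ.le, Real.sqrt_eq_rpow]
    norm_num
  rw [h3, h4]
  have h5 : Real.sqrt δ ≠ 0 := (Real.sqrt_pos.2 hδ).ne'
  field_simp

def Uiso (hδ : 0 < δ) : Lp ℂ 2 (volume : Measure ℝ) ≃ₗᵢ[ℂ] Lp ℂ 2 (mP δ) where
  toLinearEquiv := LinearEquiv.ofLinear (Amap hδ) (Bmap hδ)
    (LinearMap.ext fun g => by simpa using AB hδ g)
    (LinearMap.ext fun f => by simpa using BA hδ f)
  norm_map' := normA hδ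

lemma coeU (hδ : 0 < δ) (f : Lp ℂ 2 (volume : Measure ℝ)) :
    ⇑(Uiso hδ f) =ᵐ[mP δ] fun x => cst δ * ⇑f (rho δ x) := coeA hδ f

end
end GaborAux

open MeasureTheory GaborAux

/-- Baggett's direct-integral decomposition of the Gabor representation `U^δ` of the
integer Heisenberg group, fibered form: there is a unitary
`𝒰 : L²(ℝ) → L²([0,δ) × ℤ)` intertwining `U^δ` with the fibered operators
`(t,k) ↦ e^{-2πiδr} e^{-2πiqt} e^{2πiqδk} (𝒰 f)(t, k-p)`. -/
theorem gabor_representation_direct_integral_decomposition (δ : ℝ) (hδ : 0 < δ) :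
    ∃ U : Lp ℂ 2 (volume : Measure ℝ) ≃ₗᵢ[ℂ]
        Lp ℂ 2 (((volume : Measure ℝ).restrict (Set.Ico 0 δ)).prod
          (Measure.count : Measure ℤ)),
      ∀ (p q r : ℤ) (f f' : Lp ℂ 2 (volume : Measure ℝ)),
        (∀ᵐ t : ℝ, (f' : ℝ → ℂ) t
          = Complex.exp (-(2 * (Real.pi : ℂ) * Complex.I * (δ : ℂ) * (r : ℂ)))
            * Complex.exp (2 * (Real.pi : ℂ) * Complex.I * (q : ℂ) * (δ : ℂ) * (t : ℂ))
            * (f : ℝ → ℂ) (t - (p : ℝ))) →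
        ∀ k : ℤ, ∀ᵐ t ∂((volume : Measure ℝ).restrict (Set.Ico 0 δ)),
          (U f' : ℝ × ℤ → ℂ) (t, k)
            = Complex.exp (-(2 * (Real.pi : ℂ) * Complex.I * (δ : ℂ) * (r : ℂ)))
              * Complex.exp (-(2 * (Real.pi : ℂ) * Complex.I * (q : ℂ) * (t : ℂ)))
              * Complex.exp (2 * (Real.pi : ℂ) * Complex.I * (q : ℂ) * (δ : ℂ) * (k : ℂ))
              * (U f : ℝ × ℤ → ℂ) (t, k - p) := by
  refine ⟨Uiso hδ, ?_⟩
  intro p q r f f' hf' k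
  show ∀ᵐ t ∂(mIco δ),
      (Uiso hδ f' : ℝ × ℤ → ℂ) (t, k)
        = Complex.exp (-(2 * (Real.pi : ℂ) * Complex.I * (δ : ℂ) * (r : ℂ)))
          * Complex.exp (-(2 * (Real.pi : ℂ) * Complex.I * (q : ℂ) * (t : ℂ)))
          * Complex.exp (2 * (Real.pi : ℂ) * Complex.I * (q : ℂ) * (δ : ℂ) * (k : ℂ))
          * (Uiso hδ f : ℝ × ℤ → ℂ) (t, k - p)
  have hK1 : ∀ᵐ t ∂(mIco δ),
      ⇑(Uiso hδ f') (t, k) = cst δ * ⇑f' ((k : ℝ) - t / δ) :=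
    perk hδ (P := fun x => ⇑(Uiso hδ f') x = cst δ * ⇑f' (rho δ x)) (coeU hδ f') k
  have hK2 : ∀ᵐ t ∂(mIco δ),
      ⇑(Uiso hδ f) (t, k - p) = cst δ * ⇑f (((k - p : ℤ) : ℝ) - t / δ) :=
    perk hδ (P := fun x => ⇑(Uiso hδ f) x = cst δ * ⇑f (rho δ x)) (coeU hδ f) (k - p)
  have hf'' : ∀ᵐ t ∂(mIco δ),
      ⇑f' ((k : ℝ) - t / δ)
        = Complex.exp (-(2 * (Real.pi : ℂ) * Complex.I * (δ : ℂ) * (r : ℂ)))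
          * Complex.exp (2 * (Real.pi : ℂ) * Complex.I * (q : ℂ) * (δ : ℂ)
              * (((k : ℝ) - t / δ : ℝ) : ℂ))
          * ⇑f ((k : ℝ) - t / δ - (p : ℝ)) :=
    perk hδ (P := fun x => ⇑f' (rho δ x)
        = Complex.exp (-(2 * (Real.pi : ℂ) * Complex.I * (δ : ℂ) * (r : ℂ)))
          * Complex.exp (2 * (Real.pi : ℂ) * Complex.I * (q : ℂ) * (δ : ℂ)
              * ((rho δ x : ℝ) : ℂ))
          * ⇑f (rho δ x - (p : ℝ)))
      (ae_comp_rho hδ (P := fun s => ⇑f' s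
        = Complex.exp (-(2 * (Real.pi : ℂ) * Complex.I * (δ : ℂ) * (r : ℂ)))
          * Complex.exp (2 * (Real.pi : ℂ) * Complex.I * (q : ℂ) * (δ : ℂ) * ((s : ℝ) : ℂ))
          * ⇑f (s - (p : ℝ))) hf') k
  filter_upwards [hK1, hK2, hf''] with t h1 h2 h3
  have harg : (((k - p : ℤ) : ℝ) - t / δ) = ((k : ℝ) - t / δ - (p : ℝ)) := by
    push_cast; ring
  rw [h1, h3]
  rw [harg] at h2
  rw [h2]
  have hδℂ : (δ : ℂ) ≠ 0 := by exact_mod_cast hδ.ne'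
  have hexp : Complex.exp (2 * (Real.pi : ℂ) * Complex.I * (q : ℂ) * (δ : ℂ)
        * (((k : ℝ) - t / δ : ℝ) : ℂ))
      = Complex.exp (-(2 * (Real.pi : ℂ) * Complex.I * (q : ℂ) * (t : ℂ)))
        * Complex.exp (2 * (Real.pi : ℂ) * Complex.I * (q : ℂ) * (δ : ℂ) * (k : ℂ)) := by
    rw [← Complex.exp_add]
    congr 1
    push_cast
    field_simp
    ring
  rw [hexp]
  ring
end

section
/- Let 0 < δ ≤ 1. Then there exists f ∈ L²(ℝ) such that the Gabor system {M_{qδ} T_p f : p,q ∈ ℤ} is a normalized tight frame for L²(ℝ), i.e. ∑_{p,q∈ℤ} |⟨g, M_{qδ} T_p f⟩|² = ‖g‖² for every g ∈ L²(ℝ). -/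
/-!
Take the window `f = √δ · 1_{(0,1]}`. For a fixed translation `p`, the atoms `M_{qδ} T_p f`,
`q ∈ ℤ`, are `√δ e^{2πiqδt}` cut down to `(p, p + 1]`. Since `1 ≤ 1/δ`, this interval lies in a
period `(p, p + 1/δ]` of the characters `e^{2πiqδt}`, so Parseval's identity on that period gives
`∑_q |⟨g, M_{qδ} T_p f⟩|² = ∫_{(p, p+1]} |g|²`. The intervals `(p, p + 1]` tile `ℝ`, and summing
over `p` yields `‖g‖²`.
-/

open MeasureTheory Set Complex
open scoped ComplexConjugate

lemma HasSum.prod_of_nonneg {α β : Type*} {f : α × β → ℝ} (hf : 0 ≤ f) {r : α → ℝ} {s : ℝ}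
    (hr : ∀ a, HasSum (fun b => f (a, b)) (r a)) (hs : HasSum r s) : HasSum f s := by
  have hsum : Summable f := (summable_prod_of_nonneg hf).2
    ⟨fun a => (hr a).summable, by simpa only [(hr _).tsum_eq] using hs.summable⟩
  exact (hsum.hasSum.prod_fiberwise hr).unique hs ▸ hsum.hasSum

lemma MeasureTheory.L2.norm_sq_eq_integral_norm_sq {α 𝕜 E : Type*} [MeasurableSpace α]
    {μ : Measure α} [RCLike 𝕜] [NormedAddCommGroup E] [InnerProductSpace 𝕜 E] (g : Lp E 2 μ) :
    ‖g‖ ^ 2 = ∫ t, ‖g t‖ ^ 2 ∂μ := by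
  rw [norm_sq_eq_re_inner (𝕜 := 𝕜), L2.inner_def, ← integral_re (L2.integrable_inner g g)]
  exact integral_congr_ae (ae_of_all _ fun t => inner_self_eq_norm_sq (𝕜 := 𝕜) (g t))

lemma hasSum_setIntegral_Ioc_intCast {E : Type*} [NormedAddCommGroup E] [NormedSpace ℝ E]
    {f : ℝ → E} (hf : Integrable f) :
    HasSum (fun n : ℤ => ∫ x in Ioc (n : ℝ) (n + 1), f x) (∫ x, f x) := by
  simpa only [iUnion_Ioc_intCast, Measure.restrict_univ] using
    hasSum_integral_iUnion (fun _ => measurableSet_Ioc) (pairwise_disjoint_Ioc_intCast ℝ)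
      (by rwa [iUnion_Ioc_intCast, integrableOn_univ])

lemma intervalIntegral_indicator_of_subset {E : Type*} [NormedAddCommGroup E] [NormedSpace ℝ E]
    {a b : ℝ} (hab : a ≤ b) {s : Set ℝ} (hs : MeasurableSet s) (hsub : s ⊆ Ioc a b)
    (f : ℝ → E) : ∫ x in a..b, s.indicator f x = ∫ x in s, f x := by
  rw [intervalIntegral.integral_of_le hab, setIntegral_indicator hs, inter_eq_right.2 hsub]

theorem hasSum_norm_sq_setIntegral_fourier {T : ℝ} [hT : Fact (0 < T)] {a : ℝ} {s : Set ℝ}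
    (hs : MeasurableSet s) (hsub : s ⊆ Ioc a (a + T)) {g : ℝ → ℂ}
    (hg : MemLp g 2 (volume.restrict s)) :
    HasSum (fun n : ℤ => ‖∫ x in s, fourier (-n) (x : AddCircle T) * g x‖ ^ 2)
      (T * ∫ x in s, ‖g x‖ ^ 2) := by
  have hT0 : T ≠ 0 := hT.out.ne'
  have haT : a < a + T := lt_add_of_pos_right a hT.out
  have hparseval := hasSum_sq_fourierCoeffOn haT
    (((memLp_indicator_iff_restrict hs).2 hg).restrict (Ioc a (a + T)))
  have hcoeff (n : ℤ) : fourierCoeffOn haT (s.indicator g) n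
      = T⁻¹ • ∫ x in s, fourier (-n) (x : AddCircle T) * g x := by
    rw [fourierCoeffOn_eq_integral, add_sub_cancel_left, one_div]
    simp_rw [← indicator_smul_apply s (fun x => fourier (-n) (x : AddCircle T)),
      intervalIntegral_indicator_of_subset haT.le hs hsub, smul_eq_mul]
  have hnorm : ∫ x in a..a + T, ‖s.indicator g x‖ ^ 2 = ∫ x in s, ‖g x‖ ^ 2 := by
    rw [← intervalIntegral_indicator_of_subset haT.le hs hsub]
    congr with x
    by_cases hx : x ∈ s <;> simp [hx]
  simp only [hcoeff, hnorm, add_sub_cancel_left, norm_smul, mul_pow, smul_eq_mul,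
    Real.norm_of_nonneg (inv_nonneg.2 hT.out.le)] at hparseval
  have h := hparseval.mul_left (T ^ 2)
  simp only [← mul_assoc, ← mul_pow, mul_inv_cancel₀ hT0, one_mul] at h
  rwa [sq, mul_inv_cancel_right₀ hT0] at h

lemma norm_exp_two_pi_I_mul (α t : ℝ) : ‖exp (2 * Real.pi * I * α * t)‖ = 1 := by
  rw [Complex.norm_exp]
  simp

lemma MeasureTheory.MemLp.modulation_comp_sub {p : ENNReal} {f : ℝ → ℂ} (hf : MemLp f p)
    (α a : ℝ) : MemLp (fun t : ℝ => exp (2 * Real.pi * I * α * t) * f (t - a)) p := by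
  have hshift : MemLp (fun t => f (t - a)) p :=
    hf.comp_measurePreserving (measurePreserving_sub_right volume a)
  refine hshift.of_le ?_ (ae_of_all _ fun t => ?_)
  · exact (Continuous.aestronglyMeasurable (by fun_prop)).mul hshift.aestronglyMeasurable
  · rw [norm_mul, norm_exp_two_pi_I_mul, one_mul]

/-- `M_α T_a f`. -/
noncomputable def modTranslate (α a : ℝ) (f : Lp ℂ 2 (volume : Measure ℝ)) :
    Lp ℂ 2 (volume : Measure ℝ) :=
  ((Lp.memLp f).modulation_comp_sub α a).toLp _

lemma coeFn_modTranslate (α a : ℝ) (f : Lp ℂ 2 (volume : Measure ℝ)) :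
    modTranslate α a f =ᵐ[volume] fun t => exp (2 * Real.pi * I * α * t) * f (t - a) :=
  MemLp.coeFn_toLp _

noncomputable def boxWindow (c : ℂ) : Lp ℂ 2 (volume : Measure ℝ) :=
  indicatorConstLp 2 (measurableSet_Ioc (a := (0 : ℝ)) (b := 1)) measure_Ioc_lt_top.ne c

lemma boxWindow_comp_sub_ae_eq (c : ℂ) (a : ℝ) :
    (fun t => boxWindow c (t - a)) =ᵐ[volume] (Ioc a (a + 1)).indicator fun _ => c := by
  have h := (measurePreserving_sub_right volume a).quasiMeasurePreserving.ae_eq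
    (indicatorConstLp_coeFn : boxWindow c =ᵐ[volume] (Ioc 0 1).indicator fun _ => c)
  filter_upwards [h] with t ht
  have : boxWindow c (t - a) = (Ioc (0 : ℝ) 1).indicator (fun _ => c) (t - a) := ht
  rw [this, ← indicator_comp_right (fun t => t - a), preimage_sub_const_Ioc, zero_add, add_comm]
  rfl

lemma inner_modTranslate_boxWindow (α a : ℝ) (c : ℂ) (g : Lp ℂ 2 (volume : Measure ℝ)) :
    inner ℂ (modTranslate α a (boxWindow c)) g
      = conj c * ∫ t in Ioc a (a + 1), conj (exp (2 * Real.pi * I * α * t)) * g t := by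
  rw [L2.inner_def, ← integral_const_mul, ← integral_indicator measurableSet_Ioc]
  refine integral_congr_ae ?_
  filter_upwards [coeFn_modTranslate α a (boxWindow c), boxWindow_comp_sub_ae_eq c a]
    with t ht hbox
  rw [RCLike.inner_apply, ht, hbox]
  by_cases h : t ∈ Ioc a (a + 1) <;> simp [h]
  ring

lemma hasSum_norm_sq_inner_modTranslate_boxWindow {δ : ℝ} (hδ0 : 0 < δ) (hδ1 : δ ≤ 1) (a : ℝ)
    (g : Lp ℂ 2 (volume : Measure ℝ)) :
    HasSum (fun q : ℤ => ‖inner ℂ g (modTranslate (q * δ) a (boxWindow (Real.sqrt δ)))‖ ^ 2)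
      (∫ t in Ioc a (a + 1), ‖g t‖ ^ 2) := by
  have : Fact (0 < δ⁻¹) := ⟨inv_pos.2 hδ0⟩
  have hchar (q : ℤ) (t : ℝ) :
      conj (exp (2 * Real.pi * I * (q * δ : ℝ) * t)) = fourier (-q) (t : AddCircle δ⁻¹) := by
    rw [fourier_neg, fourier_coe_apply]
    push_cast
    field_simp
  have hterm (q : ℤ) :
      ‖inner ℂ g (modTranslate (q * δ) a (boxWindow (Real.sqrt δ)))‖ ^ 2
        = δ * ‖∫ t in Ioc a (a + 1), fourier (-q) (t : AddCircle δ⁻¹) * g t‖ ^ 2 := by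
    rw [← inner_conj_symm, RCLike.norm_conj, inner_modTranslate_boxWindow]
    simp only [hchar, norm_mul, RCLike.norm_conj, Complex.norm_real,
      Real.norm_of_nonneg (Real.sqrt_nonneg δ), mul_pow, Real.sq_sqrt hδ0.le]
  have hsub : Ioc a (a + 1) ⊆ Ioc a (a + δ⁻¹) :=
    Ioc_subset_Ioc_right (by linarith [(one_le_inv₀ hδ0).2 hδ1])
  have h := (hasSum_norm_sq_setIntegral_fourier measurableSet_Ioc hsub
    ((Lp.memLp g).restrict _)).mul_left δ
  rwa [← mul_assoc, mul_inv_cancel₀ hδ0.ne', one_mul, ← funext hterm] at h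

/-- For `0 < δ ≤ 1` there exists `f ∈ L²(ℝ)` whose Gabor system
`{M_{qδ} T_p f : p, q ∈ ℤ}` is a normalized tight (Parseval) frame for `L²(ℝ)`. -/
theorem gabor_ntf_exists_of_delta_le_one (δ : ℝ) (hδ0 : 0 < δ) (hδ1 : δ ≤ 1) :
    ∃ (f : Lp ℂ 2 (volume : Measure ℝ)) (G : ℤ × ℤ → Lp ℂ 2 (volume : Measure ℝ)),
      (∀ p q : ℤ, ∀ᵐ t : ℝ, (G (p, q) : ℝ → ℂ) t
        = Complex.exp (2 * (Real.pi : ℂ) * Complex.I * ((q : ℂ) * (δ : ℂ)) * (t : ℂ))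
          * (f : ℝ → ℂ) (t - (p : ℝ))) ∧
      ∀ g : Lp ℂ 2 (volume : Measure ℝ),
        ∑' pq : ℤ × ℤ, ‖(inner ℂ g (G pq) : ℂ)‖ ^ 2 = ‖g‖ ^ 2 := by
  set f := boxWindow (Real.sqrt δ)
  refine ⟨f, fun pq => modTranslate (pq.2 * δ) pq.1 f, fun p q => ?_, fun g => ?_⟩
  · filter_upwards [coeFn_modTranslate (q * δ) p f] with t ht
    rw [ht]
    push_cast
    rfl
  · have hrows (p : ℤ) := hasSum_norm_sq_inner_modTranslate_boxWindow hδ0 hδ1 p g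
    have htiling := hasSum_setIntegral_Ioc_intCast
      ((memLp_two_iff_integrable_sq_norm (Lp.aestronglyMeasurable g)).1 (Lp.memLp g))
    rw [L2.norm_sq_eq_integral_norm_sq (𝕜 := ℂ)]
    exact (HasSum.prod_of_nonneg (fun _ => by positivity) hrows htiling).tsum_eq
end

section
/- The family of functions {t ↦ e^{2πiqt} χ_{[0,1)}(t−p) : p,q ∈ ℤ}, i.e. {M_q T_p χ_{[0,1)} : p,q ∈ ℤ}, is an orthonormal basis of L²(ℝ). -/
open MeasureTheory Complex Set
open scoped Real ComplexConjugate InnerProductSpace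

noncomputable section
namespace GaborD


lemma ind_shift (p : ℤ) (t : ℝ) :
    Set.indicator (Set.Ico (0:ℝ) 1) (fun _ => (1:ℂ)) (t - p)
      = Set.indicator (Set.Ico (p:ℝ) (p+1)) (fun _ => (1:ℂ)) t := by
  simp only [Set.indicator_apply, Set.mem_Ico]
  congr 1
  simp only [eq_iff_iff]
  constructor <;> rintro ⟨h1, h2⟩ <;> constructor <;> linarith

lemma exp_int_interval (n : ℤ) (hn : n ≠ 0) (p : ℝ) :
    ∫ t in p..(p+1), Complex.exp (2 * (π:ℂ) * I * n * t) = 0 := by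
  have hc : (2 * (π:ℂ) * I * n) ≠ 0 := by
    simp [Real.pi_ne_zero, Complex.I_ne_zero, hn]
  have h := integral_exp_mul_complex (a := p) (b := p + 1) hc
  rw [show (fun t : ℝ => Complex.exp (2 * (π:ℂ) * I * n * t))
      = fun t : ℝ => Complex.exp ((2 * (π:ℂ) * I * n) * t) from rfl] at *
  rw [h]
  push_cast
  have : Complex.exp ((2 * (π:ℂ) * I * n) * (p+1)) = Complex.exp ((2 * (π:ℂ) * I * n) * p) := by
    push_cast
    rw [show (2 * (π:ℂ) * I * n) * (p+1) = (2 * (π:ℂ) * I * n) * p + n * (2 * π * I) by ring]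
    rw [Complex.exp_add, Complex.exp_int_mul_two_pi_mul_I, mul_one]
  rw [this, sub_self, zero_div]

lemma conj_exp (q : ℤ) (t : ℝ) :
    conj (Complex.exp (2 * (π:ℂ) * I * q * t)) = Complex.exp (2 * (π:ℂ) * I * (-q) * t) := by
  rw [← Complex.exp_conj]
  congr 1
  simp only [map_mul, Complex.conj_I, Complex.conj_ofReal, map_ofNat, map_intCast]
  ring

lemma integrand_eq (p p' q q' : ℤ) (t : ℝ) :
    conj (Complex.exp (2 * (π:ℂ) * I * q * t)
        * Set.indicator (Set.Ico (p:ℝ) (p+1)) (fun _ => (1:ℂ)) t)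
      * (Complex.exp (2 * (π:ℂ) * I * q' * t)
        * Set.indicator (Set.Ico (p':ℝ) (p'+1)) (fun _ => (1:ℂ)) t)
    = Set.indicator (Set.Ico (p:ℝ) (p+1)) (fun _ => (1:ℂ)) t
      * Set.indicator (Set.Ico (p':ℝ) (p'+1)) (fun _ => (1:ℂ)) t
      * Complex.exp (2 * (π:ℂ) * I * ((q' - q : ℤ)) * t) := by
  rw [map_mul, conj_exp]
  have : Complex.exp (2 * (π:ℂ) * I * (-q) * t) * Complex.exp (2 * (π:ℂ) * I * q' * t)
      = Complex.exp (2 * (π:ℂ) * I * ((q' - q : ℤ)) * t) := by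
    rw [← Complex.exp_add]; congr 1; push_cast; ring
  simp only [Set.indicator_apply]
  split_ifs <;> simp_all

/-- main integral computation -/
lemma integral_eq (p p' q q' : ℤ) :
    (∫ t : ℝ, Set.indicator (Set.Ico (p:ℝ) (p+1)) (fun _ => (1:ℂ)) t
      * Set.indicator (Set.Ico (p':ℝ) (p'+1)) (fun _ => (1:ℂ)) t
      * Complex.exp (2 * (π:ℂ) * I * ((q' - q : ℤ)) * t))
    = if (p, q) = (p', q') then 1 else 0 := by
  by_cases hp : p = p'
  · subst hp
    have h1 : ∀ t : ℝ, Set.indicator (Set.Ico (p:ℝ) (p+1)) (fun _ => (1:ℂ)) t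
        * Set.indicator (Set.Ico (p:ℝ) (p+1)) (fun _ => (1:ℂ)) t
        * Complex.exp (2 * (π:ℂ) * I * ((q' - q : ℤ)) * t)
        = Set.indicator (Set.Ico (p:ℝ) (p+1))
            (fun t => Complex.exp (2 * (π:ℂ) * I * ((q' - q : ℤ)) * t)) t := by
      intro t
      simp only [Set.indicator_apply]
      split_ifs <;> simp
    simp only [h1]
    rw [integral_indicator measurableSet_Ico, integral_Ico_eq_integral_Ioo,
      ← integral_Ioc_eq_integral_Ioo,
      ← intervalIntegral.integral_of_le (by linarith : (p:ℝ) ≤ p + 1)]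
    by_cases hq : q = q'
    · subst hq
      simp only [sub_self, Int.cast_zero, mul_zero, zero_mul, Complex.exp_zero]
      rw [intervalIntegral.integral_const]
      simp
    · rw [exp_int_interval (q' - q) (sub_ne_zero.mpr (Ne.symm hq)) p]
      simp [hq]
  · have h0 : ∀ t : ℝ, Set.indicator (Set.Ico (p:ℝ) (p+1)) (fun _ => (1:ℂ)) t
        * Set.indicator (Set.Ico (p':ℝ) (p'+1)) (fun _ => (1:ℂ)) t
        * Complex.exp (2 * (π:ℂ) * I * ((q' - q : ℤ)) * t) = 0 := by
      intro t
      simp only [Set.indicator_apply, Set.mem_Ico]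
      split_ifs with h1 h2
      · exfalso
        obtain ⟨a1, a2⟩ := h1; obtain ⟨b1, b2⟩ := h2
        have : p = p' := by
          have h1 : (p : ℝ) < p' + 1 := lt_of_le_of_lt a1 b2
          have h2 : (p' : ℝ) < p + 1 := lt_of_le_of_lt b1 a2
          have : p < p' + 1 := by exact_mod_cast h1
          have : p' < p + 1 := by exact_mod_cast h2
          omega
        exact hp this
      all_goals simp
    simp only [h0]
    simp [Prod.ext_iff, hp]




-- density building block: zero Fourier coefficients on an interval imply a.e. zero there
lemma ae_zero_of_coeffs (p : ℤ) (F : ℝ → ℂ) (hFm : StronglyMeasurable F)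
    (hF2 : MemLp F 2 (volume.restrict (Set.Ioc (p:ℝ) (p+1))))
    (hcoef : ∀ n : ℤ, ∫ t in Set.Ioc (p:ℝ) (p+1),
      Complex.exp (2 * (π:ℂ) * I * (-n) * t) * F t = 0) :
    F =ᵐ[volume.restrict (Set.Ioc (p:ℝ) (p+1))] 0 := by
  haveI : Fact ((0:ℝ) < 1) := ⟨one_pos⟩
  set g : AddCircle (1:ℝ) → ℂ := AddCircle.liftIoc 1 p F with hg
  have hmp := AddCircle.measurePreserving_mk (T := 1) p
  have hvol : (volume : Measure (AddCircle (1:ℝ))) = AddCircle.haarAddCircle := by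
    rw [AddCircle.volume_eq_smul_haarAddCircle]
    simp
  have hgm : StronglyMeasurable g :=
    hFm.comp_measurable
      ((measurable_subtype_coe).comp (AddCircle.measurableEquivIoc 1 p).measurable)
  have hcoe : ∀ x : ℝ, x ∈ Set.Ioc (p:ℝ) (p+1) → g ((x : AddCircle (1:ℝ))) = F x := by
    intro x hx
    exact AddCircle.liftIoc_coe_apply (by simpa using hx)
  have hae : (fun x : ℝ => g ((x : AddCircle (1:ℝ))))
      =ᵐ[volume.restrict (Set.Ioc (p:ℝ) (p+1))] F := by
    filter_upwards [self_mem_ae_restrict (measurableSet_Ioc :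
      MeasurableSet (Set.Ioc (p:ℝ) (p+1)))] with x hx
    exact hcoe x hx
  -- g is Memℒp 2 haar
  have hmap : (AddCircle.haarAddCircle : Measure (AddCircle (1:ℝ)))
      = Measure.map ((↑·) : ℝ → AddCircle (1:ℝ))
          (volume.restrict (Set.Ioc (p:ℝ) (p+1))) := by
    rw [← hvol, hmp.map_eq]
  have hg2 : MemLp g 2 (AddCircle.haarAddCircle : Measure (AddCircle (1:ℝ))) := by
    rw [hmap]
    rw [memLp_map_measure_iff hgm.aestronglyMeasurable
      (AddCircle.measurable_mk' (a := (1:ℝ))).aemeasurable]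
    exact hF2.ae_eq hae.symm
  -- Fourier coefficients of g vanish
  have hfc : ∀ n : ℤ, fourierCoeff g n = 0 := by
    intro n
    rw [fourierCoeff_eq_intervalIntegral g n p]
    have : ∫ x in (p:ℝ)..(p + 1), fourier (-n) (x : AddCircle (1:ℝ)) • g x
        = ∫ x in Set.Ioc (p:ℝ) (p+1), fourier (-n) (x : AddCircle (1:ℝ)) • g x := by
      rw [intervalIntegral.integral_of_le (by linarith : (p:ℝ) ≤ p + 1)]
    rw [this]
    have heq : ∀ x ∈ Set.Ioc (p:ℝ) (p+1),
        fourier (-n) (x : AddCircle (1:ℝ)) • g ((x : AddCircle (1:ℝ)))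
          = Complex.exp (2 * (π:ℂ) * I * (-n) * x) * F x := by
      intro x hx
      rw [hcoe x hx, fourier_coe_apply, smul_eq_mul]
      norm_num
    rw [setIntegral_congr_fun measurableSet_Ioc heq, hcoef n]
    simp
  -- conclude g = 0 a.e.
  have hgz : g =ᵐ[(AddCircle.haarAddCircle : Measure (AddCircle (1:ℝ)))] 0 := by
    have h1 : ∀ n : ℤ, fourierBasis.repr (hg2.toLp g) n = 0 := by
      intro n
      rw [fourierBasis_repr]
      have : fourierCoeff ((hg2.toLp g : Lp ℂ 2 (AddCircle.haarAddCircle)) : AddCircle (1:ℝ) → ℂ) n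
          = fourierCoeff g n := by
        unfold fourierCoeff
        exact integral_congr_ae (by filter_upwards [hg2.coeFn_toLp] with x hx; rw [hx])
      rw [this, hfc]
    have h2 : hg2.toLp g = 0 := by
      apply fourierBasis.repr.injective
      ext n
      simp [h1 n]
    have := hg2.coeFn_toLp
    rw [h2] at this
    exact (this.symm.trans (Lp.coeFn_zero ℂ 2 _))
  -- pull back
  have : (fun x : ℝ => g ((x : AddCircle (1:ℝ))))
      =ᵐ[volume.restrict (Set.Ioc (p:ℝ) (p+1))] (fun _ => 0) := by
    have hmp2 : MeasurePreserving ((↑·) : ℝ → AddCircle (1:ℝ))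
        (volume.restrict (Set.Ioc (p:ℝ) (p+1))) AddCircle.haarAddCircle := hvol ▸ hmp
    exact hgz.comp_tendsto hmp2.quasiMeasurePreserving.tendsto_ae
  exact hae.symm.trans this




-- glue: a.e. zero on every Ioc p (p+1) implies a.e. zero
lemma ae_zero_glue (F : ℝ → ℂ) (hFm : StronglyMeasurable F)
    (h : ∀ p : ℤ, F =ᵐ[volume.restrict (Set.Ioc (p:ℝ) (p+1))] 0) :
    F =ᵐ[(volume : Measure ℝ)] 0 := by
  have hms : MeasurableSet {t : ℝ | F t ≠ 0} :=
    (hFm.measurable (measurableSet_singleton 0)).compl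
  have hsub : {t : ℝ | F t ≠ 0} ⊆ ⋃ p : ℤ, {t : ℝ | F t ≠ 0} ∩ Set.Ioc (p:ℝ) (p+1) := by
    intro t ht
    refine Set.mem_iUnion.2 ⟨⌈t⌉ - 1, ht, ?_, ?_⟩
    · push_cast; linarith [Int.ceil_lt_add_one t]
    · push_cast; linarith [Int.le_ceil t]
  have hnull : ∀ p : ℤ, volume ({t : ℝ | F t ≠ 0} ∩ Set.Ioc (p:ℝ) (p+1)) = 0 := by
    intro p
    have := (ae_iff.1 (h p))
    simp only [Pi.zero_apply] at this
    rwa [Measure.restrict_apply hms] at this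
  have : volume (⋃ p : ℤ, {t : ℝ | F t ≠ 0} ∩ Set.Ioc (p:ℝ) (p+1)) = 0 :=
    measure_iUnion_null hnull
  exact ae_iff.2 (measure_mono_null hsub this)

end GaborD

open GaborD

/-- The Gabor system `{M_q T_p χ_[0,1)} : p, q ∈ ℤ}` is an orthonormal basis of `L²(ℝ)`. -/
theorem gabor_indicator_orthonormal_basis
    (G : ℤ × ℤ → Lp ℂ 2 (volume : Measure ℝ))
    (hG : ∀ p q : ℤ, ∀ᵐ t : ℝ, (G (p, q) : ℝ → ℂ) t
      = Complex.exp (2 * (Real.pi : ℂ) * Complex.I * (q : ℂ) * (t : ℂ))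
        * Set.indicator (Set.Ico (0 : ℝ) 1) (fun _ => (1 : ℂ)) (t - (p : ℝ))) :
    Orthonormal ℂ G ∧
      (Submodule.span ℂ (Set.range G)).topologicalClosure = ⊤ := by
  constructor
  · rw [orthonormal_iff_ite]
    rintro ⟨p, q⟩ ⟨p', q'⟩
    have : ⟪G (p, q), G (p', q')⟫_ℂ = if (p, q) = (p', q') then 1 else 0 := by
      rw [MeasureTheory.L2.inner_def, ← integral_eq p p' q q']
      apply integral_congr_ae
      filter_upwards [hG p q, hG p' q'] with t h1 h2
      rw [RCLike.inner_apply, h1, h2, ind_shift, ind_shift, mul_comm (Complex.exp (2 * (π:ℂ) * I * q' * t) * _), integrand_eq]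
    simpa [Prod.ext_iff] using this
  · rw [Submodule.topologicalClosure_eq_top_iff, Submodule.eq_bot_iff]
    intro f hf
    have hinner : ∀ p q : ℤ, ⟪G (p, q), f⟫_ℂ = 0 := fun p q =>
      (Submodule.mem_orthogonal _ _).1 hf (G (p, q)) (Submodule.subset_span ⟨(p, q), rfl⟩)
    set F : ℝ → ℂ := ⇑f with hFdef
    have hFm : StronglyMeasurable F := Lp.stronglyMeasurable f
    have hcoef : ∀ p n : ℤ, ∫ t in Set.Ioc (p:ℝ) (p+1),
        Complex.exp (2 * (π:ℂ) * I * (-n) * t) * F t = 0 := by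
      intro p n
      have h0 := hinner p n
      rw [MeasureTheory.L2.inner_def] at h0
      have heq : (fun t : ℝ => ⟪(G (p, n) : ℝ → ℂ) t, F t⟫_ℂ)
          =ᵐ[volume] fun t : ℝ => Set.indicator (Set.Ico (p:ℝ) (p+1))
            (fun t => Complex.exp (2 * (π:ℂ) * I * (-n) * t) * F t) t := by
        filter_upwards [hG p n] with t h1
        rw [RCLike.inner_apply, h1, ind_shift, map_mul, conj_exp]
        simp only [Set.indicator_apply]
        split_ifs <;> simp <;> ring
      rw [integral_congr_ae heq, integral_indicator measurableSet_Ico,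
        integral_Ico_eq_integral_Ioo, ← integral_Ioc_eq_integral_Ioo] at h0
      exact h0
    have hzero : F =ᵐ[(volume : Measure ℝ)] 0 := by
      apply ae_zero_glue F hFm
      intro p
      apply ae_zero_of_coeffs p F hFm ((Lp.memLp f).restrict _) (hcoef p)
    have : f = 0 := by
      rw [← Lp.eq_zero_iff_ae_eq_zero] at hzero
      · exact hzero
    simp [this]
end
end

section
/- Let ψ_H : ℝ → ℝ be defined by ψ_H(t) = 1 for t ∈ [0, 1/2], ψ_H(t) = −1 for t ∈ (1/2, 1], and ψ_H(t) = 0 otherwise (the Haar wavelet). Then the family {t ↦ 2^{j/2} ψ_H(2^j t − k) : j ∈ ℤ, k ∈ ℤ} is an orthonormal basis of L²(ℝ). -/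
set_option maxHeartbeats 1000000

open MeasureTheory Set
open scoped InnerProductSpace


open MeasureTheory Set

noncomputable def haarF : ℝ → ℝ := fun t =>
  if 0 ≤ t ∧ t ≤ 1/2 then 1 else if 1/2 < t ∧ t ≤ 1 then -1 else 0

lemma haarF_eq_indicator : haarF = fun t =>
    (Set.Icc (0:ℝ) (1/2)).indicator (fun _ => (1:ℝ)) t
      - (Set.Ioc (1/2:ℝ) 1).indicator (fun _ => (1:ℝ)) t := by
  funext t
  simp only [haarF, Set.indicator_apply, Set.mem_Icc, Set.mem_Ioc]
  split_ifs with h1 h2 h3 h4 h5 <;> norm_num at * <;> try linarith [h1.1, h1.2]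

lemma haarF_support {t : ℝ} (h : haarF t ≠ 0) : t ∈ Set.Icc (0:ℝ) 1 := by
  simp only [haarF] at h
  split_ifs at h with h1 h2
  · exact ⟨h1.1, by linarith [h1.2]⟩
  · exact ⟨by linarith [h2.1], h2.2⟩
  · simp at h

lemma haarF_sq : ∀ t, haarF t * haarF t =
    (Set.Icc (0:ℝ) 1).indicator (fun _ => (1:ℝ)) t := by
  intro t
  by_cases h : t ∈ Set.Icc (0:ℝ) 1
  · rw [Set.indicator_of_mem h]
    obtain ⟨h0, h1⟩ := h
    simp only [haarF]
    rcases le_or_gt t (1/2) with hh | hh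
    · rw [if_pos ⟨h0, hh⟩]; norm_num
    · rw [if_neg (by push_neg; intro _; linarith), if_pos ⟨hh, h1⟩]; norm_num
  · rw [Set.indicator_of_notMem h]
    have : haarF t = 0 := by
      by_contra hne; exact h (haarF_support hne)
    rw [this, mul_zero]

lemma haarF_integrable : Integrable haarF := by
  rw [haarF_eq_indicator]
  exact ((integrable_indicator_iff measurableSet_Icc).2 (integrableOn_const (by simp) (by simp))).sub
    ((integrable_indicator_iff measurableSet_Ioc).2 (integrableOn_const (by simp) (by simp)))

lemma haarF_integral : ∫ t, haarF t = 0 := by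
  rw [haarF_eq_indicator]
  rw [integral_sub ((integrable_indicator_iff measurableSet_Icc).2 (integrableOn_const (by simp) (by simp)))
    ((integrable_indicator_iff measurableSet_Ioc).2 (integrableOn_const (by simp) (by simp)))]
  rw [integral_indicator_const _ measurableSet_Icc, integral_indicator_const _ measurableSet_Ioc]
  simp [Real.volume_Icc, Real.volume_Ioc]
  norm_num

lemma haarF_sq_integral : ∫ t, haarF t * haarF t = 1 := by
  simp only [haarF_sq]
  rw [integral_indicator_const _ measurableSet_Icc]
  simp [Real.volume_Icc]

lemma haarF_one {t : ℝ} (h1 : 0 ≤ t) (h2 : t ≤ 1/2) : haarF t = 1 := by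
  simp only [haarF]; rw [if_pos ⟨h1, h2⟩]

lemma haarF_negone {t : ℝ} (h1 : 1/2 < t) (h2 : t ≤ 1) : haarF t = -1 := by
  simp only [haarF]
  rw [if_neg (by push_neg; intro h; linarith), if_pos ⟨h1, h2⟩]

lemma haarF_zero {t : ℝ} (h : t ∉ Set.Icc (0:ℝ) 1) : haarF t = 0 := by
  by_contra hne; exact h (haarF_support hne)

/-- helper: functions equal off a finite set are a.e. equal -/
lemma ae_eq_off_finite {α : Type*} {g h : ℝ → α} (s : Set ℝ) (hs : s.Finite)
    (H : ∀ t ∉ s, g t = h t) : g =ᵐ[volume] h := by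
  have hsub : {t | ¬ g t = h t} ⊆ s := fun t ht => by
    by_contra hc; exact ht (H t hc)
  rw [Filter.EventuallyEq, ae_iff]
  exact measure_mono_null hsub (hs.countable.measure_zero volume)

lemma haarF_const_on (m : ℕ) (hm : 1 ≤ m) (κ : ℤ) :
    ∃ c : ℝ, ∀ s ∈ Set.Ioo ((κ:ℝ)/2^m) ((κ+1:ℝ)/2^m), haarF s = c := by
  have h2m : (0:ℝ) < 2^m := by positivity
  rcases le_or_gt (κ+1) 0 with hc1 | hc1
  · refine ⟨0, fun s hs => haarF_zero fun hmem => ?_⟩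
    have hcr : ((κ:ℝ)+1) ≤ 0 := by exact_mod_cast hc1
    have h' : ((κ:ℝ)+1)/2^m ≤ 0 := by
      rw [div_nonpos_iff]; exact Or.inr ⟨hcr, h2m.le⟩
    linarith [hs.2, hmem.1]
  rcases le_or_gt (2*(κ+1)) (2^m) with hc2 | hc2
  · refine ⟨1, fun s hs => haarF_one ?_ ?_⟩
    · have h0 : (0:ℝ) ≤ (κ:ℝ)/2^m := by
        apply div_nonneg _ h2m.le
        exact_mod_cast (by omega : (0:ℤ) ≤ κ)
      linarith [hs.1]
    · have : ((κ:ℝ)+1)/2^m ≤ 1/2 := by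
        rw [div_le_div_iff₀ h2m (by norm_num)]
        push_cast
        have : (2:ℝ)*(κ+1) ≤ 2^m := by exact_mod_cast hc2
        linarith
      linarith [hs.2]
  rcases le_or_gt (κ+1) (2^m) with hc3 | hc3
  · have hκ : (2:ℤ)^m ≤ 2*κ := by
      have heven : (2:ℤ) ∣ 2^m := dvd_pow_self 2 (by omega)
      omega
    refine ⟨-1, fun s hs => haarF_negone ?_ ?_⟩
    · have : (1:ℝ)/2 ≤ (κ:ℝ)/2^m := by
        rw [div_le_div_iff₀ (by norm_num) h2m]
        have : (2:ℝ)^m ≤ 2*κ := by exact_mod_cast hκ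
        linarith
      linarith [hs.1]
    · have : ((κ:ℝ)+1)/2^m ≤ 1 := by
        rw [div_le_one h2m]
        exact_mod_cast hc3
      linarith [hs.2]
  · refine ⟨0, fun s hs => haarF_zero fun hmem => ?_⟩
    have : (1:ℝ) ≤ (κ:ℝ)/2^m := by
      rw [le_div_iff₀ h2m]
      have : (2:ℝ)^m ≤ κ := by exact_mod_cast Int.lt_add_one_iff.mp hc3
      linarith
    have := hs.1
    have := hmem.2
    linarith

lemma haar_core_integral (m : ℕ) (κ : ℤ) (h : ¬(m = 0 ∧ κ = 0)) :
    ∫ s : ℝ, haarF s * haarF ((2:ℝ)^m * s - κ) = 0 := by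
  rcases Nat.eq_zero_or_pos m with hm | hm
  · have hκ : κ ≠ 0 := fun hk => h ⟨hm, hk⟩
    subst hm
    have hae : (fun s : ℝ => haarF s * haarF ((2:ℝ)^(0:ℕ) * s - κ)) =ᵐ[volume]
        (fun _ => (0:ℝ)) := by
      apply ae_eq_off_finite {0, 1} ((Set.finite_singleton 1).insert 0)
      intro t ht
      simp only [Set.mem_insert_iff, Set.mem_singleton_iff, not_or] at ht
      simp only [pow_zero, one_mul]
      by_contra hne
      obtain ⟨hne1, hne2⟩ := mul_ne_zero_iff.mp hne
      have h1 := haarF_support hne1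
      have h2 := haarF_support hne2
      simp only [Set.mem_Icc] at h1 h2
      rcases lt_or_gt_of_ne hκ with hneg | hpos
      · have : (κ:ℝ) ≤ -1 := by exact_mod_cast (by omega : κ ≤ -1)
        exact ht.1 (le_antisymm (by linarith [h2.2]) h1.1)
      · have : (1:ℝ) ≤ (κ:ℝ) := by exact_mod_cast hpos
        exact ht.2 (le_antisymm h1.2 (by linarith [h2.1]))
    rw [integral_congr_ae hae, integral_const, smul_zero]
  · obtain ⟨c, hc⟩ := haarF_const_on m hm κ
    have h2m : (0:ℝ) < 2^m := by positivity
    have key : (fun s : ℝ => haarF s * haarF ((2:ℝ)^m * s - κ)) =ᵐ[volume]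
        (fun s => c * haarF ((2:ℝ)^m * s - κ)) := by
      apply ae_eq_off_finite {(κ:ℝ)/2^m, ((κ:ℝ)+1)/2^m}
        ((Set.finite_singleton _).insert _)
      intro t ht
      simp only [Set.mem_insert_iff, Set.mem_singleton_iff, not_or] at ht
      by_cases hz : haarF ((2:ℝ)^m * t - κ) = 0
      · rw [hz, mul_zero, mul_zero]
      · have hmem := haarF_support hz
        simp only [Set.mem_Icc] at hmem
        have ht1 : (κ:ℝ)/2^m ≤ t := by
          rw [div_le_iff₀ h2m]; nlinarith [hmem.1]
        have ht2 : t ≤ ((κ:ℝ)+1)/2^m := by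
          rw [le_div_iff₀ h2m]; nlinarith [hmem.2]
        rw [hc t ⟨lt_of_le_of_ne ht1 (Ne.symm ht.1), lt_of_le_of_ne ht2 ht.2⟩]
    rw [integral_congr_ae key, integral_const_mul]
    have hz : ∫ s : ℝ, haarF ((2:ℝ)^m * s - κ) = 0 := by
      have hcomp := MeasureTheory.Measure.integral_comp_mul_left
        (fun u : ℝ => haarF (u - (κ:ℝ))) ((2:ℝ)^m)
      rw [hcomp, integral_sub_right_eq_self haarF ((κ:ℝ)), haarF_integral, smul_zero]
    rw [hz, mul_zero]

lemma haar_ortho_le (j k j' k' : ℤ) (hle : j ≤ j') (hne : ¬(j = j' ∧ k = k')) :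
    ∫ t : ℝ, haarF ((2:ℝ)^j * t - k) * haarF ((2:ℝ)^j' * t - k') = 0 := by
  set m : ℕ := (j' - j).toNat with hmdef
  have hmm : j' - j = (m:ℤ) := (Int.toNat_of_nonneg (by omega)).symm
  set κ : ℤ := k' - 2^m * k with hκdef
  have hcomp := MeasureTheory.Measure.integral_comp_mul_left
      (fun u : ℝ => haarF (u - k) * haarF ((2:ℝ)^m * u - k')) ((2:ℝ)^j)
  have hpow : ∀ t : ℝ, (2:ℝ)^m * ((2:ℝ)^j * t) = (2:ℝ)^j' * t := by
    intro t
    rw [← mul_assoc, ← zpow_natCast (2:ℝ) m, ← zpow_add₀ (two_ne_zero), ← hmm]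
    ring_nf
  have heq1 : ∫ t : ℝ, haarF ((2:ℝ)^j * t - k) * haarF ((2:ℝ)^j' * t - k')
      = ∫ t : ℝ, haarF ((2:ℝ)^j * t - k) * haarF ((2:ℝ)^m * ((2:ℝ)^j * t) - k') := by
    congr 1; funext t; rw [hpow]
  rw [heq1, hcomp]
  have heq2 : ∫ u : ℝ, haarF (u - k) * haarF ((2:ℝ)^m * u - k')
      = ∫ u : ℝ, haarF u * haarF ((2:ℝ)^m * u - κ) := by
    rw [← integral_add_right_eq_self
      (fun u : ℝ => haarF (u - (k:ℝ)) * haarF ((2:ℝ)^m * u - (k':ℝ))) ((k:ℝ))]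
    congr 1; funext u
    simp only [add_sub_cancel_right]
    congr 2
    push_cast [hκdef]
    ring
  rw [heq2, haar_core_integral m κ (by
    rintro ⟨hm0, hκ0⟩
    rw [hκdef, hm0] at hκ0
    simp only [pow_zero, one_mul] at hκ0
    exact hne ⟨by omega, by omega⟩), smul_zero]

lemma haar_ortho (j k j' k' : ℤ) (hne : ¬(j = j' ∧ k = k')) :
    ∫ t : ℝ, ((2:ℝ)^((j:ℝ)/2) * haarF ((2:ℝ)^j * t - k))
      * ((2:ℝ)^((j':ℝ)/2) * haarF ((2:ℝ)^j' * t - k')) = 0 := by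
  have hrw : ∀ t : ℝ, ((2:ℝ)^((j:ℝ)/2) * haarF ((2:ℝ)^j * t - k))
      * ((2:ℝ)^((j':ℝ)/2) * haarF ((2:ℝ)^j' * t - k'))
      = ((2:ℝ)^((j:ℝ)/2) * (2:ℝ)^((j':ℝ)/2))
        * (haarF ((2:ℝ)^j * t - k) * haarF ((2:ℝ)^j' * t - k')) := by
    intro t; ring
  simp_rw [hrw, integral_const_mul]
  rcases le_total j j' with hle | hle
  · rw [haar_ortho_le j k j' k' hle hne, mul_zero]
  · have : ∫ t : ℝ, haarF ((2:ℝ)^j * t - k) * haarF ((2:ℝ)^j' * t - k')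
        = ∫ t : ℝ, haarF ((2:ℝ)^j' * t - k') * haarF ((2:ℝ)^j * t - k) := by
      congr 1; funext t; ring
    rw [this, haar_ortho_le j' k' j k hle (fun hh => hne ⟨hh.1.symm, hh.2.symm⟩), mul_zero]

lemma haar_norm_one (j k : ℤ) :
    ∫ t : ℝ, ((2:ℝ)^((j:ℝ)/2) * haarF ((2:ℝ)^j * t - k))
      * ((2:ℝ)^((j:ℝ)/2) * haarF ((2:ℝ)^j * t - k)) = 1 := by
  have hrw : ∀ t : ℝ, ((2:ℝ)^((j:ℝ)/2) * haarF ((2:ℝ)^j * t - k))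
      * ((2:ℝ)^((j:ℝ)/2) * haarF ((2:ℝ)^j * t - k))
      = ((2:ℝ)^((j:ℝ)/2) * (2:ℝ)^((j:ℝ)/2))
        * (haarF ((2:ℝ)^j * t - k) * haarF ((2:ℝ)^j * t - k)) := by
    intro t; ring
  simp_rw [hrw, integral_const_mul]
  have hcomp := MeasureTheory.Measure.integral_comp_mul_left
      (fun u : ℝ => haarF (u - k) * haarF (u - k)) ((2:ℝ)^j)
  rw [hcomp, integral_sub_right_eq_self (fun u : ℝ => haarF u * haarF u) ((k:ℝ)),
    haarF_sq_integral]
  have hcc : (2:ℝ)^((j:ℝ)/2) * (2:ℝ)^((j:ℝ)/2) = (2:ℝ)^j := by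
    rw [← Real.rpow_add (by norm_num)]
    norm_num [Real.rpow_intCast]
  rw [hcc]
  have hpos : (0:ℝ) < (2:ℝ)^j := zpow_pos (by norm_num) _
  rw [smul_eq_mul, mul_one, abs_of_pos (by positivity), mul_inv_cancel₀ (ne_of_gt hpos)]

noncomputable def Aint (f : ℝ → ℂ) (j k : ℤ) : ℂ :=
  ∫ t in Set.Ico ((k:ℝ)/2^j) (((k:ℝ)+1)/2^j), f t

lemma hInt_Ico {f : ℝ → ℂ} (hloc : LocallyIntegrable f volume) (a b : ℝ) :
    IntegrableOn f (Set.Ico a b) volume :=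
  (hloc.integrableOn_isCompact isCompact_Icc).mono_set Set.Ico_subset_Icc_self

lemma dyL (j k : ℤ) : ((2*k:ℤ):ℝ)/2^(j+1) = (k:ℝ)/2^j := by
  have h : (2:ℝ)^j ≠ 0 := zpow_ne_zero _ two_ne_zero
  rw [zpow_add₀ (two_ne_zero) j 1]
  push_cast
  field_simp

lemma dyR (j k : ℤ) : ((((2*k+1:ℤ)):ℝ) + 1)/2^(j+1) = ((k:ℝ)+1)/2^j := by
  have h : (2:ℝ)^j ≠ 0 := zpow_ne_zero _ two_ne_zero
  rw [zpow_add₀ (two_ne_zero) j 1]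
  push_cast
  field_simp
  ring

lemma dyM (j k : ℤ) : ((((2*k:ℤ)):ℝ) + 1)/2^(j+1) = ((2*k+1:ℤ):ℝ)/2^(j+1) := by push_cast; ring_nf

lemma Aint_split (f : ℝ → ℂ) (hloc : LocallyIntegrable f volume) (j k : ℤ) :
    Aint f j k = Aint f (j+1) (2*k) + Aint f (j+1) (2*k+1) := by
  have h2j : (0:ℝ) < 2^j := zpow_pos two_pos j
  have h2 : (2:ℝ)^(j+1) = 2 * 2^j := by
    rw [zpow_add₀ (two_ne_zero : (2:ℝ) ≠ 0) j 1]; ring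
  set a := (k:ℝ)/2^j with ha
  set c := ((k:ℝ)+1)/2^j with hc
  set b := (2*(k:ℝ)+1)/2^(j+1) with hb
  have e1 : ((2*k:ℤ):ℝ)/2^(j+1) = a := by
    rw [ha, h2]; push_cast; field_simp
  have e2 : (((2*k:ℤ):ℝ)+1)/2^(j+1) = b := by
    rw [hb]; push_cast; ring_nf
  have e3 : (((2*k+1:ℤ)):ℝ)/2^(j+1) = b := by
    rw [hb]; push_cast; ring_nf
  have e4 : ((((2*k+1:ℤ)):ℝ)+1)/2^(j+1) = c := by
    rw [hc, h2]; push_cast; field_simp; ring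
  have hab : a ≤ b := by
    rw [ha, hb, h2, div_le_div_iff₀ h2j (by positivity)]
    nlinarith [h2j]
  have hbc : b ≤ c := by
    rw [hc, hb, h2, div_le_div_iff₀ (by positivity) h2j]
    nlinarith [h2j]
  unfold Aint
  rw [e1, e2, e3, e4, ← Set.Ico_union_Ico_eq_Ico hab hbc,
      setIntegral_union (Set.Ico_disjoint_Ico_same) measurableSet_Ico
        (hInt_Ico hloc _ _) (hInt_Ico hloc _ _)]

lemma Aint_children_eq (f : ℝ → ℂ) (hloc : LocallyIntegrable f volume)
    (hI : ∀ j k : ℤ, ∫ t : ℝ, ((haarF ((2:ℝ)^j * t - k) : ℝ) : ℂ) * f t = 0) (j k : ℤ) :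
    Aint f (j+1) (2*k) = Aint f (j+1) (2*k+1) := by
  have h2j : (0:ℝ) < 2^j := zpow_pos two_pos j
  have h2 : (2:ℝ)^(j+1) = 2 * 2^j := by
    rw [zpow_add₀ (two_ne_zero : (2:ℝ) ≠ 0) j 1]; ring
  set a := (k:ℝ)/2^j with ha
  set c := ((k:ℝ)+1)/2^j with hc
  set b := (2*(k:ℝ)+1)/2^(j+1) with hb
  have e1 : ((2*k:ℤ):ℝ)/2^(j+1) = a := by
    rw [ha, h2]; push_cast; field_simp
  have e2 : (((2*k:ℤ):ℝ)+1)/2^(j+1) = b := by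
    rw [hb]; push_cast; ring_nf
  have e3 : (((2*k+1:ℤ)):ℝ)/2^(j+1) = b := by
    rw [hb]; push_cast; ring_nf
  have e4 : ((((2*k+1:ℤ)):ℝ)+1)/2^(j+1) = c := by
    rw [hc, h2]; push_cast; field_simp; ring
  have hA : a * 2^j = k := by rw [ha]; field_simp
  have hB : b * 2^j = (k:ℝ) + 1/2 := by rw [hb, h2]; field_simp
  have hC : c * 2^j = (k:ℝ) + 1 := by rw [hc]; field_simp
  have hbc : b ≤ c := by nlinarith [hB, hC, h2j]
  have key : ∫ t : ℝ, ((haarF ((2:ℝ)^j * t - k) : ℝ) : ℂ) * f t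
      = (∫ t in Set.Ico a b, f t) - (∫ t in Set.Ico b c, f t) := by
    have hae : (fun t : ℝ => ((haarF ((2:ℝ)^j * t - k) : ℝ) : ℂ) * f t) =ᵐ[volume]
        (fun t => (Set.Ico a b).indicator f t - (Set.Ico b c).indicator f t) := by
      apply ae_eq_off_finite {b, c} ((Set.finite_singleton c).insert b)
      intro t ht
      simp only [Set.mem_insert_iff, Set.mem_singleton_iff, not_or] at ht
      rcases lt_or_ge t a with h1 | h1
      · have hab : a ≤ b := by nlinarith [hA, hB, h2j]
        rw [haarF_zero (by
          simp only [Set.mem_Icc, not_and_or, not_le]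
          left
          nlinarith [mul_lt_mul_of_pos_right h1 h2j, hA])]
        rw [Set.indicator_of_notMem (Set.notMem_Ico_of_lt h1),
          Set.indicator_of_notMem (Set.notMem_Ico_of_lt (lt_of_lt_of_le h1 hab))]
        simp
      rcases lt_or_ge t b with h2' | h2'
      · rw [haarF_one
          (by nlinarith [mul_le_mul_of_nonneg_right h1 h2j.le, hA])
          (by nlinarith [mul_lt_mul_of_pos_right h2' h2j, hB])]
        rw [Set.indicator_of_mem (Set.mem_Ico.mpr ⟨h1, h2'⟩),
          Set.indicator_of_notMem (Set.notMem_Ico_of_lt h2')]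
        simp
      have h2'' : b < t := lt_of_le_of_ne h2' (Ne.symm ht.1)
      rcases lt_or_ge t c with h3 | h3
      · rw [haarF_negone
          (by nlinarith [mul_lt_mul_of_pos_right h2'' h2j, hB])
          (by nlinarith [mul_lt_mul_of_pos_right h3 h2j, hC])]
        rw [Set.indicator_of_notMem (Set.notMem_Ico_of_ge h2'),
          Set.indicator_of_mem (Set.mem_Ico.mpr ⟨h2', h3⟩)]
        push_cast
        ring
      have h3' : c < t := lt_of_le_of_ne h3 (Ne.symm ht.2)
      · rw [haarF_zero (by
          simp only [Set.mem_Icc, not_and_or, not_le]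
          right
          nlinarith [mul_lt_mul_of_pos_right h3' h2j, hC])]
        rw [Set.indicator_of_notMem (Set.notMem_Ico_of_ge h2'),
          Set.indicator_of_notMem (Set.notMem_Ico_of_ge h3)]
        simp
    rw [integral_congr_ae hae, integral_sub, integral_indicator measurableSet_Ico,
      integral_indicator measurableSet_Ico]
    · exact (integrable_indicator_iff measurableSet_Ico).2 (hInt_Ico hloc _ _)
    · exact (integrable_indicator_iff measurableSet_Ico).2 (hInt_Ico hloc _ _)
  have h0 := hI j k
  rw [key] at h0
  unfold Aint
  rw [e1, e2, e3, e4]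
  exact sub_eq_zero.mp h0

lemma Aint_child (f : ℝ → ℂ) (hloc : LocallyIntegrable f volume)
    (hI : ∀ j k : ℤ, ∫ t : ℝ, ((haarF ((2:ℝ)^j * t - k) : ℝ) : ℂ) * f t = 0) (j n : ℤ) :
    Aint f (j+1) n = Aint f j (n/2) / 2 := by
  have hsplit := Aint_split f hloc j (n/2)
  have heq := Aint_children_eq f hloc hI j (n/2)
  rcases Int.emod_two_eq_zero_or_one n with h | h
  · have hn2 : 2 * (n/2) = n := by omega
    rw [hn2] at hsplit heq
    rw [← heq] at hsplit
    linear_combination -hsplit / 2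
  · have hn2 : 2 * (n/2) + 1 = n := by omega
    rw [hn2] at hsplit heq
    rw [heq] at hsplit
    linear_combination -hsplit / 2

open scoped InnerProductSpace in
lemma Aint_bound (f : Lp ℂ 2 (volume : Measure ℝ)) (j k : ℤ) :
    ‖Aint (⇑f) j k‖ ≤ ‖f‖ * ((2:ℝ)^(-j:ℤ)) ^ ((1:ℝ)/2) := by
  have h2j : (0:ℝ) < 2^j := zpow_pos two_pos j
  have hμ : volume (Set.Ico ((k:ℝ)/2^j) (((k:ℝ)+1)/2^j)) ≠ ⊤ := by
    rw [Real.volume_Ico]; exact ENNReal.ofReal_ne_top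
  have hin := MeasureTheory.L2.inner_indicatorConstLp_one (𝕜 := ℂ)
    (measurableSet_Ico (a := (k:ℝ)/2^j) (b := ((k:ℝ)+1)/2^j)) hμ f
  have heq : Aint (⇑f) j k
      = ⟪(indicatorConstLp 2 measurableSet_Ico hμ (1:ℂ)), f⟫_ℂ := by
    rw [hin]; rfl
  rw [heq]
  refine le_trans (norm_inner_le_norm _ _) ?_
  rw [norm_indicatorConstLp (by norm_num) (by norm_num)]
  have hvol : volume.real (Set.Ico ((k:ℝ)/2^j) (((k:ℝ)+1)/2^j)) = (2:ℝ)^(-j:ℤ) := by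
    rw [measureReal_def, Real.volume_Ico, ENNReal.toReal_ofReal (by rw [sub_nonneg]; gcongr; linarith)]
    rw [zpow_neg]
    field_simp
    ring
  rw [hvol, mul_comm]
  gcongr
  simp

lemma rpow_half_int (m : ℤ) : ((2:ℝ)^(m:ℤ)) ^ ((1:ℝ)/2) = (2:ℝ) ^ ((m:ℝ)/2) := by
  rw [← Real.rpow_intCast 2 m, ← Real.rpow_mul (by norm_num)]
  ring_nf

lemma Aint_zero (f : Lp ℂ 2 (volume : Measure ℝ))
    (hI : ∀ j k : ℤ, ∫ t : ℝ, ((haarF ((2:ℝ)^j * t - k) : ℝ) : ℂ) * (⇑f) t = 0) (j k : ℤ) :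
    Aint (⇑f) j k = 0 := by
  have hloc : LocallyIntegrable (⇑f) volume := (Lp.memLp f).locallyIntegrable one_le_two
  have anc : ∀ n : ℕ, ∃ k' : ℤ, Aint (⇑f) j k = Aint (⇑f) (j - n) k' / 2^n := by
    intro n
    induction n with
    | zero => exact ⟨k, by simp⟩
    | succ n ih =>
      obtain ⟨k', h⟩ := ih
      have hc : Aint (⇑f) (j - n) k' = Aint (⇑f) (j - (n+1:ℕ)) (k'/2) / 2 := by
        have hstep := Aint_child (⇑f) hloc hI (j - (n+1:ℕ)) k'
        rw [show (j - ((n+1:ℕ):ℤ) + 1 : ℤ) = j - n by push_cast; ring] at hstep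
        exact hstep
      refine ⟨k'/2, ?_⟩
      rw [h, hc, pow_succ]
      ring
  set r : ℝ := (2:ℝ) ^ (-(1:ℝ)/2) with hr
  have hrpos : 0 < r := Real.rpow_pos_of_pos two_pos _
  have hrlt : r < 1 := Real.rpow_lt_one_of_one_lt_of_neg one_lt_two (by norm_num)
  set C : ℝ := ‖f‖ * (2:ℝ) ^ ((-j:ℝ)/2) with hC
  have hb : ∀ n : ℕ, ‖Aint (⇑f) j k‖ ≤ C * r^n := by
    intro n
    obtain ⟨k', hk'⟩ := anc n
    rw [hk', norm_div]
    have hn2 : ‖((2:ℂ)^n)‖ = (2:ℝ)^(n:ℝ) := by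
      rw [norm_pow, Real.rpow_natCast]
      norm_num
    rw [hn2]
    have hbd := Aint_bound f (j - n) k'
    rw [rpow_half_int] at hbd
    have hexp : ((-(j - (n:ℤ)):ℤ):ℝ)/2 = ((n:ℝ) - (j:ℝ))/2 := by push_cast; ring
    rw [hexp] at hbd
    have h2n : (0:ℝ) < (2:ℝ)^(n:ℝ) := Real.rpow_pos_of_pos two_pos _
    have step1 : ‖Aint (⇑f) (j - (n:ℤ)) k'‖ / (2:ℝ)^(n:ℝ)
        ≤ (‖f‖ * (2:ℝ)^(((n:ℝ)-(j:ℝ))/2)) / (2:ℝ)^(n:ℝ) := by gcongr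
    refine step1.trans (le_of_eq ?_)
    · rw [hC, hr]
      rw [div_eq_mul_inv, ← Real.rpow_neg (by norm_num : (0:ℝ) ≤ 2)]
      rw [← Real.rpow_natCast ((2:ℝ)^(-(1:ℝ)/2)) n, ← Real.rpow_mul (by norm_num)]
      rw [mul_assoc, ← Real.rpow_add two_pos, mul_assoc, ← Real.rpow_add two_pos]
      congr 1
      ring
  have htend : Filter.Tendsto (fun n : ℕ => C * r^n) Filter.atTop (nhds 0) := by
    rw [show (0:ℝ) = C * 0 by ring]
    exact (tendsto_pow_atTop_nhds_zero_of_lt_one hrpos.le hrlt).const_mul _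
  have hle : ‖Aint (⇑f) j k‖ ≤ 0 := ge_of_tendsto htend (Filter.Eventually.of_forall hb)
  simpa using norm_le_zero_iff.mp hle

lemma integral_Icc_zero_of_Aint_zero (f : ℝ → ℂ) (hloc : LocallyIntegrable f volume)
    (hA : ∀ j k : ℤ, Aint f j k = 0) :
    ∀ a b : ℝ, a ≤ b → ∫ t in Set.Icc a b, f t = 0 := by
  have hII : ∀ a b : ℝ, IntervalIntegrable f volume a b := by
    intro a b
    rw [intervalIntegrable_iff]
    exact (hloc.integrableOn_isCompact isCompact_Icc).mono_set Set.uIoc_subset_uIcc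
  set F : ℝ → ℂ := fun y => ∫ t in (0:ℝ)..y, f t with hF
  have hstep : ∀ u v : ℝ, F v = F u + ∫ t in u..v, f t := by
    intro u v
    rw [hF]
    exact (intervalIntegral.integral_add_adjacent_intervals (hII 0 u) (hII u v)).symm
  have hAI : ∀ j k : ℤ, (∫ t in ((k:ℝ)/2^j)..(((k:ℝ)+1)/2^j), f t) = 0 := by
    intro j k
    have h2j : (0:ℝ) < 2^j := zpow_pos two_pos j
    rw [intervalIntegral.integral_of_le (by gcongr; linarith)]
    rw [integral_Ioc_eq_integral_Ioo, ← integral_Ico_eq_integral_Ioo]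
    exact hA j k
  have hFd : ∀ j k : ℤ, F ((k:ℝ)/2^j) = 0 := by
    intro j k
    induction k using Int.induction_on with
    | zero => simp [hF]
    | succ k ih =>
      have h := hstep (((k:ℤ):ℝ)/2^j) ((((k:ℤ):ℝ)+1)/2^j)
      rw [hAI j k, ih, zero_add] at h
      convert h using 3
      push_cast; ring
    | pred k ih =>
      have h := hstep ((((-(k:ℤ)-1) : ℤ):ℝ)/2^j) ((((-(k:ℤ)) : ℤ):ℝ)/2^j)
      have hAI' := hAI j (-(k:ℤ)-1)
      rw [show (((-(k:ℤ)-1) : ℤ):ℝ) + 1 = (((-(k:ℤ)) : ℤ):ℝ) by push_cast; ring] at hAI'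
      rw [hAI', add_zero] at h
      rw [ih] at h
      exact h.symm
  have hFcont : Continuous F := intervalIntegral.continuous_primitive hII 0
  have hdense : Dense {y : ℝ | ∃ j k : ℤ, y = (k:ℝ)/2^j} := by
    intro x
    rw [Metric.mem_closure_iff]
    intro ε hε
    obtain ⟨n, hn⟩ := exists_pow_lt_of_lt_one hε (by norm_num : (1:ℝ)/2 < 1)
    refine ⟨(⌊x * 2^n⌋ : ℝ)/2^(n:ℤ), ⟨(n:ℤ), ⌊x * 2^n⌋, rfl⟩, ?_⟩
    have h2n : (0:ℝ) < 2^n := by positivity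
    have hfl1 : (⌊x * 2^n⌋ : ℝ) ≤ x * 2^n := Int.floor_le _
    have hfl2 : x * 2^n < (⌊x * 2^n⌋ : ℝ) + 1 := Int.lt_floor_add_one _
    rw [Real.dist_eq, zpow_natCast, abs_of_nonneg (by rw [sub_nonneg, div_le_iff₀ h2n]; linarith)]
    rw [sub_lt_iff_lt_add]
    calc x = (x * 2^n)/2^n := by field_simp
    _ < ((⌊x * 2^n⌋ : ℝ) + 1)/2^n := by gcongr
    _ ≤ (1/2)^n + (⌊x * 2^n⌋:ℝ)/2^n := by
        rw [div_pow, one_pow, add_div]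
        ring_nf
        exact le_rfl
    _ < ε + (⌊x * 2^n⌋:ℝ)/2^n := by gcongr
  have hFzero : ∀ y, F y = 0 := by
    have : F = fun _ => (0:ℂ) := by
      apply Continuous.ext_on hdense hFcont continuous_const
      rintro y ⟨j, k, rfl⟩
      exact hFd j k
    intro y; rw [this]
  intro a b hab
  have : (∫ t in a..b, f t) = 0 := by
    have h := hstep a b
    rw [hFzero a, hFzero b, zero_add] at h
    exact h.symm
  rw [intervalIntegral.integral_of_le hab, integral_Ioc_eq_integral_Ioo] at this
  rw [integral_Icc_eq_integral_Ioo]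
  exact this

/-- The Haar system `{D₂^j T_k ψ_H : j, k ∈ ℤ}` is an orthonormal basis of `L²(ℝ)`. -/
theorem haar_orthonormal_basis
    (ψH : ℝ → ℝ)
    (hψ : ∀ t : ℝ, ψH t =
      if 0 ≤ t ∧ t ≤ 1/2 then 1 else if 1/2 < t ∧ t ≤ 1 then -1 else 0)
    (G : ℤ × ℤ → Lp ℂ 2 (volume : Measure ℝ))
    (hG : ∀ j k : ℤ, ∀ᵐ t : ℝ, (G (j, k) : ℝ → ℂ) t
      = (((2 : ℝ) ^ ((j : ℝ) / 2) : ℝ) : ℂ) * (ψH ((2 : ℝ) ^ (j : ℤ) * t - (k : ℝ)) : ℂ)) :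
    Orthonormal ℂ G ∧
      (Submodule.span ℂ (Set.range G)).topologicalClosure = ⊤ := by
  have hψF : ψH = haarF := funext fun t => by rw [hψ t]; rfl
  set Φ : ℤ × ℤ → ℝ → ℝ :=
    fun p t => (2:ℝ)^((p.1:ℝ)/2) * haarF ((2:ℝ)^(p.1) * t - p.2) with hΦ
  have hGa : ∀ p : ℤ × ℤ, (⇑(G p)) =ᵐ[volume] fun t => ((Φ p t : ℝ) : ℂ) := by
    rintro ⟨j, k⟩
    filter_upwards [hG j k] with t ht
    rw [ht, hψF, hΦ]
    push_cast
    ring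
  have hinner : ∀ p q : ℤ × ℤ, ⟪G p, G q⟫_ℂ = ((∫ t : ℝ, Φ p t * Φ q t : ℝ) : ℂ) := by
    intro p q
    rw [MeasureTheory.L2.inner_def]
    have hae : (fun t => ⟪(G p) t, (G q) t⟫_ℂ) =ᵐ[volume]
        (fun t => ((Φ p t * Φ q t : ℝ) : ℂ)) := by
      filter_upwards [hGa p, hGa q] with t h1 h2
      rw [RCLike.inner_apply, h1, h2, Complex.conj_ofReal, ← Complex.ofReal_mul, mul_comm]
    rw [integral_congr_ae hae]
    exact integral_ofReal
  constructor
  · rw [orthonormal_iff_ite]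
    intro p q
    rw [hinner p q]
    by_cases hpq : p = q
    · subst hpq
      rw [if_pos rfl, haar_norm_one p.1 p.2]
      norm_num
    · rw [if_neg hpq, haar_ortho p.1 p.2 q.1 q.2 (by
        rintro ⟨h1, h2⟩
        exact hpq (Prod.ext h1 h2))]
      norm_num
  · rw [Submodule.topologicalClosure_eq_top_iff, Submodule.eq_bot_iff]
    intro x hx
    rw [Submodule.mem_orthogonal] at hx
    have hGx : ∀ j k : ℤ, ⟪G (j,k), x⟫_ℂ = 0 := fun j k =>
      hx (G (j,k)) (Submodule.subset_span (Set.mem_range_self _))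
    have hI : ∀ j k : ℤ, ∫ t : ℝ, ((haarF ((2:ℝ)^j * t - k) : ℝ) : ℂ) * (⇑x) t = 0 := by
      intro j k
      have h1 : ⟪G (j,k), x⟫_ℂ = ∫ t : ℝ, ((Φ (j,k) t : ℝ) : ℂ) * (⇑x) t := by
        rw [MeasureTheory.L2.inner_def]
        apply integral_congr_ae
        filter_upwards [hGa (j,k)] with t ht
        rw [RCLike.inner_apply, ht, Complex.conj_ofReal, mul_comm]
      have h2 : ∫ t : ℝ, ((Φ (j,k) t : ℝ) : ℂ) * (⇑x) t
          = (((2:ℝ)^((j:ℝ)/2) : ℝ) : ℂ)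
            * ∫ t : ℝ, ((haarF ((2:ℝ)^j * t - k) : ℝ) : ℂ) * (⇑x) t := by
        rw [← integral_const_mul]
        congr 1
        funext t
        rw [hΦ]
        push_cast
        ring
      have h3 := hGx j k
      rw [h1, h2] at h3
      have hcne : (((2:ℝ)^((j:ℝ)/2) : ℝ) : ℂ) ≠ 0 := by
        simp only [ne_eq, Complex.ofReal_eq_zero]
        positivity
      exact (mul_eq_zero.mp h3).resolve_left hcne
    have hloc : LocallyIntegrable (⇑x) volume := (Lp.memLp x).locallyIntegrable one_le_two
    have hIcc := integral_Icc_zero_of_Aint_zero (⇑x) hloc (Aint_zero x hI)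
    have hball : ∀ (z r : ℝ), 0 < r → ∫ t in Metric.closedBall z r, (⇑x) t = 0 := by
      intro z r hr
      rw [Real.closedBall_eq_Icc]
      exact hIcc (z - r) (z + r) (by linarith)
    have hae := IsUnifLocDoublingMeasure.ae_tendsto_average (μ := (volume : Measure ℝ))
      hloc 1
    have hxz : (⇑x) =ᵐ[volume] 0 := by
      filter_upwards [hae] with z hz
      have hδ : Filter.Tendsto (fun n : ℕ => (1:ℝ)/(n+1)) Filter.atTop (nhdsWithin 0 (Set.Ioi 0)) := by
        apply tendsto_nhdsWithin_of_tendsto_nhds_of_eventually_within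
        · exact tendsto_one_div_add_atTop_nhds_zero_nat
        · exact Filter.Eventually.of_forall fun n => by simp only [Set.mem_Ioi]; positivity
      have hmem : ∀ᶠ n : ℕ in Filter.atTop, z ∈ Metric.closedBall z (1 * ((1:ℝ)/(n+1))) := by
        apply Filter.Eventually.of_forall
        intro n
        simp only [Metric.mem_closedBall, dist_self, one_mul]
        positivity
      have htd := hz (fun _ : ℕ => z) (fun n : ℕ => (1:ℝ)/(n+1)) hδ hmem
      have hconst : ∀ n : ℕ, (⨍ y in Metric.closedBall z ((1:ℝ)/(n+1)), (⇑x) y) = 0 := by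
        intro n
        rw [setAverage_eq, hball z _ (by positivity), smul_zero]
      have htd0 : Filter.Tendsto (fun _ : ℕ => (0:ℂ)) Filter.atTop (nhds ((⇑x) z)) := by
        refine Filter.Tendsto.congr (fun n => ?_) htd
        exact hconst n
      have := tendsto_nhds_unique htd0 tendsto_const_nhds
      simpa using this
    exact (Lp.eq_zero_iff_ae_eq_zero).mpr hxz
end
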